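/- arXiv:1210.5758 — 3 statements merged into one kernel-verified Lean document; each statement's English description precedes it below -/
import Mathlib

section
/- Let U ⊆ ℝ² be a bounded, connected open set and let f : U → ℝ² be a 1-Lipschitz map such that the Lebesgue measure of f(U) equals the Lebesgue measure of U. Then f is an isometry, i.e., |f(x) - f(y)| = |x - y| for all x, y ∈ U. -/
/-!
A 1-Lipschitz self-map of a finite-dimensional normed space does not increase Haar measure, so if
it preserves the measure of `U` it cannot shrink the measure of any measurable subset of `U`. If
it shortened the distance `2r` between two points `p`, `q`, the disjoint balls `closedBall p r`
and `ball q r` would be mapped into balls around `f p` and `f q` that overlap in a set of positive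
measure, and the image of their union would be too small. Hence `f` preserves distances locally.
In an inner product space a distance-preserving map on a ball is the restriction of an affine
isometry, and on a connected set these local affine isometries all coincide.
-/

open MeasureTheory Metric Set Filter Topology
open scoped ENNReal NNReal RealInnerProductSpace

theorem MeasureTheory.measure_le_measure_image_of_subset {α β : Type*} [MeasurableSpace α]
    [MeasurableSpace β] {μ : Measure α} {ν : Measure β} {f : α → β} {U t : Set α}
    (hU : μ U ≠ ∞) (hfU : μ U ≤ ν (f '' U)) (hf : ∀ s ⊆ U, ν (f '' s) ≤ μ s)
    (ht : MeasurableSet t) (htU : t ⊆ U) : μ t ≤ ν (f '' t) := by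
  have hcover : f '' U ⊆ f '' t ∪ f '' (U \ t) := by
    rw [← image_union, union_sdiff_cancel htU]
  have hrest : μ (U \ t) ≠ ∞ := measure_ne_top_of_subset sdiff_subset hU
  refine (ENNReal.add_le_add_iff_right hrest).mp ?_
  calc μ t + μ (U \ t) = μ U := by
        rw [measure_add_sdiff ht.nullMeasurableSet, union_eq_self_of_subset_left htU]
    _ ≤ ν (f '' t ∪ f '' (U \ t)) := hfU.trans (measure_mono hcover)
    _ ≤ ν (f '' t) + μ (U \ t) :=
        (measure_union_le _ _).trans (add_le_add_right (hf _ sdiff_subset) _)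

section Measure

variable {E : Type*} [NormedAddCommGroup E] [NormedSpace ℝ E] [FiniteDimensional ℝ E]
  [MeasurableSpace E] [BorelSpace E] (μ : Measure E) [μ.IsAddHaarMeasure]

theorem LipschitzOnWith.addHaar_image_le {K : ℝ≥0} {f : E → E} {s : Set E}
    (hf : LipschitzOnWith K f s) : μ (f '' s) ≤ (K : ℝ≥0∞) ^ Module.finrank ℝ E * μ s := by
  set c := Measure.addHaarScalarFactor (μH[Module.finrank ℝ E] : Measure E) μ
  have hc : (μH[Module.finrank ℝ E] : Measure E) = c • μ := Measure.isAddLeftInvariant_eq_smul _ μ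
  have hc0 : (c : ℝ≥0∞) ≠ 0 := by
    simpa using (Measure.addHaarScalarFactor_pos_of_isAddHaarMeasure _ μ).ne'
  have hH := hf.hausdorffMeasure_image_le (d := Module.finrank ℝ E) (Nat.cast_nonneg _)
  rw [hc, ENNReal.rpow_natCast] at hH
  simp only [Measure.smul_apply, ENNReal.smul_def, smul_eq_mul] at hH
  rw [mul_left_comm] at hH
  exact (ENNReal.mul_le_mul_iff_right hc0 ENNReal.coe_ne_top).mp hH

theorem addHaar_closedBall_union_ball_lt {x y : E} {r : ℝ} (hxy : dist x y < 2 * r) :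
    μ (closedBall x r ∪ ball y r) < μ (closedBall x r) + μ (ball y r) := by
  set m := midpoint ℝ x y
  have hm : ball m ((2 * r - dist x y) / 2) ⊆ closedBall x r ∩ ball y r := by
    intro z hz
    rw [mem_ball] at hz
    have hxm : dist m x = dist x y / 2 := by
      rw [dist_comm, dist_left_midpoint]; simp [div_eq_inv_mul]
    have hym : dist m y = dist x y / 2 := by
      rw [dist_comm, dist_right_midpoint]; simp [div_eq_inv_mul]
    constructor
    · rw [mem_closedBall]; linarith [dist_triangle z m x]
    · rw [mem_ball]; linarith [dist_triangle z m y]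
  have hpos : 0 < μ (closedBall x r ∩ ball y r) :=
    (measure_ball_pos μ m (by linarith)).trans_le (measure_mono hm)
  rw [← measure_union_add_inter _ measurableSet_ball]
  exact ENNReal.lt_add_right
    (measure_union_ne_top measure_closedBall_lt_top.ne measure_ball_lt_top.ne) hpos.ne'

theorem dist_eq_of_addHaar_image_eq {U : Set E} {f : E → E} (hU : μ U ≠ ∞)
    (hf : LipschitzOnWith 1 f U) (hfU : μ (f '' U) = μ U) {p q : E}
    (hp : closedBall p (dist p q / 2) ⊆ U) (hq : ball q (dist p q / 2) ⊆ U) :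
    dist (f p) (f q) = dist p q := by
  rcases eq_or_ne p q with rfl | hpq
  · simp
  set r := dist p q / 2 with hr_def
  have hr : 0 < r := half_pos (dist_pos.mpr hpq)
  have hpU : p ∈ U := hp (mem_closedBall_self hr.le)
  have hqU : q ∈ U := hq (mem_ball_self hr)
  have hdist : ∀ a ∈ U, ∀ b ∈ U, dist (f a) (f b) ≤ dist a b := by
    simpa using hf.dist_le_mul
  refine le_antisymm (hdist p hpU q hqU) (not_lt.mp fun hlt => ?_)
  have hdisj : Disjoint (closedBall p r) (ball q r) := closedBall_disjoint_ball (by linarith)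
  have himage : f '' (closedBall p r ∪ ball q r) ⊆ closedBall (f p) r ∪ ball (f q) r := by
    rw [image_union]
    refine union_subset_union ?_ ?_ <;> rintro _ ⟨z, hz, rfl⟩
    · exact (hdist z (hp hz) p hpU).trans hz
    · exact (hdist z (hq hz) q hqU).trans_lt hz
  have hf_le : ∀ s ⊆ U, μ (f '' s) ≤ μ s := fun s hs => by
    simpa using (hf.mono hs).addHaar_image_le μ
  have hcontra := calc
    μ (closedBall (f p) r) + μ (ball (f q) r) = μ (closedBall p r ∪ ball q r) := by
      rw [measure_union hdisj measurableSet_ball, Measure.addHaar_closedBall_center μ (f p),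
        Measure.addHaar_closedBall_center μ p, Measure.addHaar_ball_center μ (f q),
        Measure.addHaar_ball_center μ q]
    _ ≤ μ (f '' (closedBall p r ∪ ball q r)) :=
      measure_le_measure_image_of_subset hU hfU.ge hf_le
        (isClosed_closedBall.measurableSet.union measurableSet_ball) (union_subset hp hq)
    _ ≤ μ (closedBall (f p) r ∪ ball (f q) r) := measure_mono himage
    _ < μ (closedBall (f p) r) + μ (ball (f q) r) :=
      addHaar_closedBall_union_ball_lt μ (by linarith)
  exact lt_irrefl _ hcontra

theorem dist_eq_on_ball_of_addHaar_image_eq {U : Set E} {f : E → E} (hU : μ U ≠ ∞)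
    (hf : LipschitzOnWith 1 f U) (hfU : μ (f '' U) = μ U) {x : E} {ε : ℝ}
    (hx : ball x (2 * ε) ⊆ U) : ∀ p ∈ ball x ε, ∀ q ∈ ball x ε, dist (f p) (f q) = dist p q := by
  intro p hp q hq
  rw [mem_ball] at hp hq
  have hpq : dist p q < 2 * ε := (dist_triangle_right p q x).trans_lt (by linarith)
  refine dist_eq_of_addHaar_image_eq μ hU hf hfU ((closedBall_subset_ball' ?_).trans hx)
    ((ball_subset_ball' ?_).trans hx) <;> linarith

end Measure

section InnerProduct

variable {E F : Type*} [NormedAddCommGroup E] [InnerProductSpace ℝ E] [NormedAddCommGroup F]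
  [InnerProductSpace ℝ F]

theorem inner_sub_sub_eq_of_dist_eq {f : E → F} {s : Set E}
    (hf : ∀ p ∈ s, ∀ q ∈ s, dist (f p) (f q) = dist p q) {x p q : E} (hx : x ∈ s) (hp : p ∈ s)
    (hq : q ∈ s) : ⟪f p - f x, f q - f x⟫ = ⟪p - x, q - x⟫ := by
  have hnorm : ∀ a ∈ s, ∀ b ∈ s, ‖f a - f b‖ = ‖a - b‖ := fun a ha b hb => by
    simpa only [dist_eq_norm] using hf a ha b hb
  rw [real_inner_eq_norm_mul_self_add_norm_mul_self_sub_norm_sub_mul_self_div_two,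
    real_inner_eq_norm_mul_self_add_norm_mul_self_sub_norm_sub_mul_self_div_two,
    sub_sub_sub_cancel_right, sub_sub_sub_cancel_right, hnorm p hp x hx, hnorm q hq x hx,
    hnorm p hp q hq]

theorem exists_affineIsometry_eqOn_ball [FiniteDimensional ℝ E] {f : E → F} {x : E} {ε : ℝ}
    (hε : 0 < ε) (hf : ∀ p ∈ ball x ε, ∀ q ∈ ball x ε, dist (f p) (f q) = dist p q) :
    ∃ A : E →ᵃⁱ[ℝ] F, EqOn f A (ball x ε) := by
  set b := stdOrthonormalBasis ℝ E
  set δ := ε / 2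
  have hδ : 0 < δ := half_pos hε
  have hxε : x ∈ ball x ε := mem_ball_self hε
  have hbmem : ∀ i, x + δ • b i ∈ ball x ε := fun i => by
    rw [mem_ball, dist_self_add_left, norm_smul, b.orthonormal.1 i, mul_one,
      Real.norm_of_nonneg hδ.le]
    exact half_lt_self hε
  set u := fun i => δ⁻¹ • (f (x + δ • b i) - f x)
  have hu : ∀ y ∈ ball x ε, ∀ i, ⟪f y - f x, u i⟫ = ⟪y - x, b i⟫ := by
    intro y hy i
    rw [real_inner_smul_right, inner_sub_sub_eq_of_dist_eq hf hxε hy (hbmem i),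
      add_sub_cancel_left, real_inner_smul_right, inv_mul_cancel_left₀ hδ.ne']
  have hu_on : Orthonormal ℝ u := by
    rw [orthonormal_iff_ite]
    intro i j
    rw [real_inner_smul_left, hu _ (hbmem i), add_sub_cancel_left, real_inner_smul_left,
      inv_mul_cancel_left₀ hδ.ne', ← orthonormal_iff_ite.mp b.orthonormal i j]
  set L : E →ₗᵢ[ℝ] F := (b.toBasis.constr ℝ u).isometryOfOrthonormal (v := b.toBasis)
    (by rw [b.coe_toBasis]; exact b.orthonormal)
    (by convert hu_on using 1; ext i; exact b.toBasis.constr_basis ℝ u i)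
  have hLb : ∀ i, L (b i) = u i := by simp [L]
  refine ⟨⟨⟨fun y => L (y - x) + f x, L.toLinearMap, fun p v => ?_⟩, L.norm_map⟩, fun y hy => ?_⟩
  · change L (v + p - x) + f x = L v + (L (p - x) + f x)
    rw [add_sub_assoc, map_add, add_assoc]
  · show f y = L (y - x) + f x
    have hLc : ⟪f y - f x, L (y - x)⟫ = ‖y - x‖ ^ 2 := by
      conv_lhs => rw [← b.sum_repr' (y - x)]
      simp only [map_sum, map_smul, hLb, inner_sum, real_inner_smul_right, hu y hy]
      rw [← real_inner_self_eq_norm_sq, ← b.sum_inner_mul_inner]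
      simp only [real_inner_comm]
    have hw : ‖f y - f x‖ = ‖y - x‖ := by simpa [dist_eq_norm] using hf y hy x hxε
    have h0 : ‖f y - f x - L (y - x)‖ ^ 2 = 0 := by
      rw [norm_sub_sq_real, hLc, hw, L.norm_map]
      ring
    rw [pow_eq_zero_iff two_ne_zero, norm_eq_zero, sub_eq_zero] at h0
    exact eq_add_of_sub_eq h0

end InnerProduct

section Connected

variable {E F : Type*} [NormedAddCommGroup E] [NormedSpace ℝ E] [NormedAddCommGroup F]
  [NormedSpace ℝ F]

theorem AffineIsometry.eq_of_eventuallyEq {A B : E →ᵃⁱ[ℝ] F} {x : E} (h : ⇑A =ᶠ[𝓝 x] B) :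
    A = B := by
  obtain ⟨s, hs, hAB⟩ := h.exists_mem
  have hspan : affineSpan ℝ s = ⊤ := affineSpan_eq_top_of_nonempty_interior
    ⟨x, interior_mono (subset_convexHull ℝ s) (mem_interior_iff_mem_nhds.mpr hs)⟩
  exact AffineIsometry.toAffineMap_injective (AffineMap.ext_on hspan hAB)

theorem dist_eq_of_forall_eventuallyEq_affineIsometry {U : Set E} (hU : IsPreconnected U)
    {f : E → F} (hf : ∀ x ∈ U, ∃ A : E →ᵃⁱ[ℝ] F, f =ᶠ[𝓝 x] A) :
    ∀ x ∈ U, ∀ y ∈ U, dist (f x) (f y) = dist x y := by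
  intro x hx y hy
  obtain ⟨A, hAx, hAy⟩ : ∃ A : E →ᵃⁱ[ℝ] F, f =ᶠ[𝓝 x] A ∧ f =ᶠ[𝓝 y] A := by
    refine hU.induction₂ (fun a b => ∃ A : E →ᵃⁱ[ℝ] F, f =ᶠ[𝓝 a] A ∧ f =ᶠ[𝓝 b] A)
      ?_ ?_ ?_ hx hy
    · intro z hz
      obtain ⟨A, hA⟩ := hf z hz
      exact nhdsWithin_le_nhds (hA.eventuallyEq_nhds.mono fun w hw => ⟨A, hA, hw⟩)
    · rintro a b c - - - ⟨A, haA, hbA⟩ ⟨B, hbB, hcB⟩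
      rw [AffineIsometry.eq_of_eventuallyEq (hbA.symm.trans hbB)] at haA
      exact ⟨B, haA, hcB⟩
    · rintro a b - - ⟨A, haA, hbA⟩
      exact ⟨A, hbA, haA⟩
  rw [hAx.eq_of_nhds, hAy.eq_of_nhds, A.dist_map]

end Connected

theorem stmt0 (U : Set (EuclideanSpace ℝ (Fin 2))) (hUb : Bornology.IsBounded U)
    (hUc : IsConnected U) (hUo : IsOpen U)
    (f : EuclideanSpace ℝ (Fin 2) → EuclideanSpace ℝ (Fin 2))
    (hf : ∀ x ∈ U, ∀ y ∈ U, dist (f x) (f y) ≤ dist x y)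
    (hmeas : volume (f '' U) = volume U) :
    ∀ x ∈ U, ∀ y ∈ U, dist (f x) (f y) = dist x y := by
  refine dist_eq_of_forall_eventuallyEq_affineIsometry hUc.isPreconnected fun x hx => ?_
  obtain ⟨ε, hε, hball⟩ := Metric.isOpen_iff.mp hUo x hx
  have hiso : ∀ p ∈ ball x (ε / 2), ∀ q ∈ ball x (ε / 2), dist (f p) (f q) = dist p q :=
    dist_eq_on_ball_of_addHaar_image_eq volume hUb.measure_lt_top.ne (LipschitzOnWith.mk_one hf)
      hmeas (by rwa [mul_div_cancel₀ _ two_ne_zero])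
  obtain ⟨A, hA⟩ := exists_affineIsometry_eqOn_ball (half_pos hε) hiso
  exact ⟨A, eventuallyEq_of_mem (ball_mem_nhds x (half_pos hε)) hA⟩
end

section
/- Let x, y ∈ ℝ² with x ≠ y, and let C = B(x, |x-y|/2) ∪ B(y, |x-y|/2) be the union of two closed discs of radius |x-y|/2. If a, b ∈ ℝ² satisfy |a - b| < |x - y|, then λ(B(a, |x-y|/2) ∪ B(b, |x-y|/2)) < λ(C). -/
open MeasureTheory Metric Set

theorem stmt1 (x y a b : EuclideanSpace ℝ (Fin 2)) (hxy : x ≠ y)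
    (hab : dist a b < dist x y) :
    volume (closedBall a (dist x y / 2) ∪ closedBall b (dist x y / 2)) <
      volume (closedBall x (dist x y / 2) ∪ closedBall y (dist x y / 2)) := by
  set r := dist x y / 2 with hr
  have hd : (0:ℝ) < dist x y := dist_pos.2 hxy
  have hrpos : 0 < r := by positivity
  -- all closed balls of radius r have same volume
  have hvol : ∀ p : EuclideanSpace ℝ (Fin 2),
      volume (closedBall p r) = volume (closedBall (0 : EuclideanSpace ℝ (Fin 2)) r) := fun p =>
    Measure.addHaar_closedBall_center volume p r
  -- tangent balls intersect in a subset of the sphere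
  have hCinter : volume (closedBall x r ∩ closedBall y r) = 0 := by
    refine measure_mono_null (fun z hz => ?_) (Measure.addHaar_sphere volume x r)
    have h1 : dist x z ≤ r := by simpa [dist_comm] using hz.1
    have h2 : dist z y ≤ r := hz.2
    have h3 : r ≤ dist x z := by
      have := dist_triangle x z y
      have : dist x y - dist z y ≤ dist x z := by linarith
      nlinarith [hr]
    have : dist x z = r := le_antisymm h1 h3
    simp only [mem_sphere, dist_comm]
    exact this
  -- intersection of a,b balls has positive measure
  have hmid : closedBall (midpoint ℝ a b) (r - dist a b / 2) ⊆
      closedBall a r ∩ closedBall b r := by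
    intro z hz
    have hza : dist z (midpoint ℝ a b) ≤ r - dist a b / 2 := hz
    have h1 : dist (midpoint ℝ a b) a = dist a b / 2 := by
      rw [dist_midpoint_left, Real.norm_two]; ring
    have h2 : dist (midpoint ℝ a b) b = dist a b / 2 := by
      rw [dist_midpoint_right, Real.norm_two]; ring
    constructor
    · have := dist_triangle z (midpoint ℝ a b) a
      simp only [mem_closedBall]; linarith
    · have := dist_triangle z (midpoint ℝ a b) b
      simp only [mem_closedBall]; linarith
  have hpos : 0 < volume (closedBall a r ∩ closedBall b r) := by
    refine lt_of_lt_of_le ?_ (measure_mono hmid)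
    exact measure_closedBall_pos volume _ (by linarith)
  have hma : MeasurableSet (closedBall b r) := measurableSet_closedBall
  have hmy : MeasurableSet (closedBall y r) := measurableSet_closedBall
  have key1 : volume (closedBall a r ∪ closedBall b r) +
      volume (closedBall a r ∩ closedBall b r) =
      volume (closedBall a r) + volume (closedBall b r) :=
    measure_union_add_inter _ hma
  have key2 : volume (closedBall x r ∪ closedBall y r) +
      volume (closedBall x r ∩ closedBall y r) =
      volume (closedBall x r) + volume (closedBall y r) :=
    measure_union_add_inter _ hmy
  rw [hCinter, add_zero, hvol x, hvol y] at key2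
  rw [hvol a, hvol b] at key1
  have hfin : volume (closedBall a r ∪ closedBall b r) ≠ ⊤ := by
    refine ne_of_lt (lt_of_le_of_lt (measure_union_le _ _) ?_)
    exact ENNReal.add_lt_top.2 ⟨measure_closedBall_lt_top, measure_closedBall_lt_top⟩
  calc volume (closedBall a r ∪ closedBall b r)
      < volume (closedBall a r ∪ closedBall b r) +
        volume (closedBall a r ∩ closedBall b r) :=
        ENNReal.lt_add_right hfin hpos.ne'
    _ = volume (closedBall x r ∪ closedBall y r) := by rw [key1, ← key2]
end

section
/- Let C ⊆ [0,1] be a nowhere dense compact set with positive one-dimensional Lebesgue measure, let B ⊆ ℝ² be the closed unit ball centered at the origin, and set U = int(B) \ (C × [0,1]). Then U is open, path-connected, and simply connected. -/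
open MeasureTheory Metric Set

/-!
Removing `C × [0, 1]` from the open unit disc leaves a contractible set, whatever `C ⊆ ℝ` is.
Push every point vertically down to the curve `y = (x² - 1) / 2`, which lies in the lower half
disc: a vertical segment either misses the slits entirely or starts below them, so it stays in
the set. The lower half disc is convex, hence contractible, so the whole set is.
-/

section SegmentRetraction

variable {E : Type*} [AddCommGroup E] [Module ℝ E] [TopologicalSpace E] [ContinuousAdd E]
  [ContinuousSMul ℝ E]

theorem ContinuousMap.Homotopic.of_segment_subset {X : Type*} [TopologicalSpace X] {U : Set E}
    (f g : C(X, U)) (hfg : ∀ x, segment ℝ (f x : E) (g x) ⊆ U) : f.Homotopic g :=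
  ⟨{ toFun := fun q ↦ ⟨(1 - q.1 : ℝ) • (f q.2 : E) + (q.1 : ℝ) • (g q.2 : E),
        hfg q.2 ⟨1 - q.1, q.1, sub_nonneg.2 q.1.2.2, q.1.2.1, sub_add_cancel _ _, rfl⟩⟩
     continuous_toFun := by fun_prop
     map_zero_left := fun x ↦ by simp
     map_one_left := fun x ↦ by simp }⟩

theorem contractibleSpace_of_segment_retraction {U L : Set E} [ContractibleSpace L]
    (hLU : L ⊆ U) (r : C(U, L)) (hr : ∀ p : U, segment ℝ (p : E) (r p) ⊆ U) :
    ContractibleSpace U := by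
  let incl : C(L, U) := ⟨inclusion hLU, continuous_inclusion hLU⟩
  have hid : (ContinuousMap.id U).Homotopic (incl.comp r) :=
    .of_segment_subset _ _ hr
  obtain ⟨c, hc⟩ := ((id_nullhomotopic L).comp_left r).comp_right incl
  exact (contractible_iff_id_nullhomotopic U).2 ⟨c, hid.trans hc⟩

end SegmentRetraction

local notation "ℝ²" => EuclideanSpace ℝ (Fin 2)

def slitDisc (C : Set ℝ) : Set ℝ² :=
  ball (0 : ℝ²) 1 \ {p : ℝ² | p 0 ∈ C ∧ p 1 ∈ Icc 0 1}

def lowerHalfDisc : Set ℝ² := ball (0 : ℝ²) 1 ∩ {p | p 1 < 0}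

noncomputable def dropToLowerHalfDisc (p : ℝ²) : ℝ² := !₂[p 0, (p 0 ^ 2 - 1) / 2]

theorem mem_ball_zero_one_iff (p : ℝ²) : p ∈ ball (0 : ℝ²) 1 ↔ p 0 ^ 2 + p 1 ^ 2 < 1 := by
  rw [mem_ball_zero_iff, EuclideanSpace.norm_eq, Fin.sum_univ_two, Real.sqrt_lt' one_pos]
  simp only [Real.norm_eq_abs, sq_abs, one_pow]

theorem isOpen_slitDisc {C : Set ℝ} (hC : IsClosed C) : IsOpen (slitDisc C) :=
  isOpen_ball.sdiff <| (hC.preimage (EuclideanSpace.proj 0).continuous).inter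
    (isClosed_Icc.preimage (EuclideanSpace.proj 1).continuous)

theorem convex_lowerHalfDisc : Convex ℝ lowerHalfDisc :=
  (convex_ball _ _).inter (convex_halfSpace_lt (EuclideanSpace.proj 1).toLinearMap.isLinear 0)

theorem lowerHalfDisc_subset_slitDisc (C : Set ℝ) : lowerHalfDisc ⊆ slitDisc C :=
  fun _ ⟨hp, hp1⟩ ↦ ⟨hp, fun ⟨_, h0, _⟩ ↦ hp1.not_ge h0⟩

theorem dropToLowerHalfDisc_mem {p : ℝ²} (hp : p ∈ ball (0 : ℝ²) 1) :
    dropToLowerHalfDisc p ∈ lowerHalfDisc := by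
  rw [mem_ball_zero_one_iff] at hp
  have hx : p 0 ^ 2 < 1 := by nlinarith [sq_nonneg (p 1)]
  refine ⟨(mem_ball_zero_one_iff _).2 ?_, ?_⟩ <;>
    simp only [dropToLowerHalfDisc, mem_ofPred_eq, PiLp.toLp_apply, Matrix.cons_val_zero,
      Matrix.cons_val_one] <;>
    nlinarith

theorem segment_dropToLowerHalfDisc_subset {C : Set ℝ} {p : ℝ²} (hp : p ∈ slitDisc C) :
    segment ℝ p (dropToLowerHalfDisc p) ⊆ slitDisc C := by
  have hdrop := dropToLowerHalfDisc_mem hp.1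
  by_cases hpC : p 0 ∈ C
  · have hp1 : p 1 < 0 := by
      by_contra! h
      have : p 1 < 1 := by nlinarith [(mem_ball_zero_one_iff p).1 hp.1, sq_nonneg (p 0)]
      exact hp.2 ⟨hpC, h, this.le⟩
    exact (convex_lowerHalfDisc.segment_subset ⟨hp.1, hp1⟩ hdrop).trans
      (lowerHalfDisc_subset_slitDisc C)
  · have hline : Convex ℝ (ball (0 : ℝ²) 1 ∩ {q | q 0 = p 0}) :=
      (convex_ball _ _).inter (convex_hyperplane (EuclideanSpace.proj 0).toLinearMap.isLinear _)
    refine (hline.segment_subset ⟨hp.1, rfl⟩ ⟨hdrop.1, by simp [dropToLowerHalfDisc]⟩).trans ?_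
    rintro q ⟨hq, hq0⟩
    exact ⟨hq, fun h ↦ hpC (hq0 ▸ h.1)⟩

theorem contractibleSpace_slitDisc (C : Set ℝ) : ContractibleSpace (slitDisc C) := by
  have : ContractibleSpace lowerHalfDisc :=
    convex_lowerHalfDisc.contractibleSpace
      ⟨!₂[0, -1 / 2], (mem_ball_zero_one_iff _).2 (by norm_num), by norm_num⟩
  let drop : C(slitDisc C, lowerHalfDisc) :=
    ⟨fun p ↦ ⟨dropToLowerHalfDisc p, dropToLowerHalfDisc_mem p.2.1⟩, by
      unfold dropToLowerHalfDisc; fun_prop⟩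
  exact contractibleSpace_of_segment_retraction (lowerHalfDisc_subset_slitDisc C) drop
    fun p ↦ segment_dropToLowerHalfDisc_subset p.2

theorem stmt9_general (C : Set ℝ) (hCc : IsCompact C) :
    IsOpen (ball (0 : EuclideanSpace ℝ (Fin 2)) 1 \ {p : EuclideanSpace ℝ (Fin 2) | p 0 ∈ C ∧ p 1 ∈ Icc 0 1}) ∧
    IsPathConnected (ball (0 : EuclideanSpace ℝ (Fin 2)) 1 \ {p : EuclideanSpace ℝ (Fin 2) | p 0 ∈ C ∧ p 1 ∈ Icc 0 1}) ∧
    SimplyConnectedSpace ((ball (0 : EuclideanSpace ℝ (Fin 2)) 1 \ {p : EuclideanSpace ℝ (Fin 2) | p 0 ∈ C ∧ p 1 ∈ Icc 0 1}) : Set (EuclideanSpace ℝ (Fin 2))) := by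
  have := contractibleSpace_slitDisc C
  unfold slitDisc at this
  exact ⟨isOpen_slitDisc hCc.isClosed,
    isPathConnected_iff_pathConnectedSpace.2 inferInstance, inferInstance⟩

theorem stmt9 (C : Set ℝ) (hC1 : C ⊆ Icc 0 1) (hCn : IsNowhereDense C) (hCc : IsCompact C)
    (hCm : 0 < volume C) :
    IsOpen (ball (0 : EuclideanSpace ℝ (Fin 2)) 1 \ {p : EuclideanSpace ℝ (Fin 2) | p 0 ∈ C ∧ p 1 ∈ Icc 0 1}) ∧
    IsPathConnected (ball (0 : EuclideanSpace ℝ (Fin 2)) 1 \ {p : EuclideanSpace ℝ (Fin 2) | p 0 ∈ C ∧ p 1 ∈ Icc 0 1}) ∧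
    SimplyConnectedSpace ((ball (0 : EuclideanSpace ℝ (Fin 2)) 1 \ {p : EuclideanSpace ℝ (Fin 2) | p 0 ∈ C ∧ p 1 ∈ Icc 0 1}) : Set (EuclideanSpace ℝ (Fin 2))) :=
  stmt9_general C hCc
end
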